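/- arXiv:2605.00573 — 3 statements merged into one kernel-verified Lean document; each statement's English description precedes it below -/
import Mathlib

section
/- Let a, b, m, n be positive integers with gcd(a,b) = 1, gcd(m,n) = 1, a − b odd, and m − n odd. Then the integers gcd(a·m + b·n, a·n + b·m) and gcd(|a·m − b·n|, |a·n − b·m|) are coprime; in particular no prime divides both. -/
/-!
A common divisor `d` of `am + bn`, `an + bm`, `am − bn`, `an − bm` divides `2am`, `2an`, `2bm`
and `2bn`; coprimality of `m, n` and then of `a, b` strips these down to `d ∣ 2`. On the other
hand `d` divides `(am + bn) + (an + bm) = (a + b)(m + n)`, which is odd, so `d` is a unit.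
-/

theorem dvd_of_dvd_mul_of_dvd_mul_of_isCoprime {R : Type*} [CommRing R] {d x m n : R}
    (hmn : IsCoprime m n) (hm : d ∣ x * m) (hn : d ∣ x * n) : d ∣ x := by
  obtain ⟨u, v, huv⟩ := hmn
  have hx : x = u * (x * m) + v * (x * n) := by linear_combination (-x) * huv
  rw [hx]
  exact dvd_add (dvd_mul_of_dvd_right hm u) (dvd_mul_of_dvd_right hn v)

theorem dvd_two_of_dvd_add_sub {R : Type*} [CommRing R] {a b m n d : R}
    (hab : IsCoprime a b) (hmn : IsCoprime m n)
    (hpm : d ∣ a * m + b * n) (hpn : d ∣ a * n + b * m)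
    (hsm : d ∣ a * m - b * n) (hsn : d ∣ a * n - b * m) : d ∣ 2 := by
  have h2am : d ∣ 2 * a * m := (dvd_add hpm hsm).trans (dvd_of_eq (by ring))
  have h2an : d ∣ 2 * a * n := (dvd_add hpn hsn).trans (dvd_of_eq (by ring))
  have h2bm : d ∣ 2 * b * m := (dvd_sub hpn hsn).trans (dvd_of_eq (by ring))
  have h2bn : d ∣ 2 * b * n := (dvd_sub hpm hsm).trans (dvd_of_eq (by ring))
  exact dvd_of_dvd_mul_of_dvd_mul_of_isCoprime hab
    (dvd_of_dvd_mul_of_dvd_mul_of_isCoprime hmn h2am h2an)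
    (dvd_of_dvd_mul_of_dvd_mul_of_isCoprime hmn h2bm h2bn)

theorem Int.odd_add_of_odd_sub {a b : ℤ} (h : Odd (a - b)) : Odd (a + b) := by
  rw [show a + b = a - b + 2 * b by ring]
  exact h.add_even (even_two_mul b)

theorem Int.isUnit_of_dvd_add_sub {a b m n d : ℤ}
    (hab : IsCoprime a b) (hmn : IsCoprime m n) (hodd_ab : Odd (a - b)) (hodd_mn : Odd (m - n))
    (hpm : d ∣ a * m + b * n) (hpn : d ∣ a * n + b * m)
    (hsm : d ∣ a * m - b * n) (hsn : d ∣ a * n - b * m) : IsUnit d := by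
  have hodd : Odd ((a + b) * (m + n)) :=
    (Int.odd_add_of_odd_sub hodd_ab).mul (Int.odd_add_of_odd_sub hodd_mn)
  have hd : d ∣ (a + b) * (m + n) :=
    (dvd_add hpm hpn).trans (dvd_of_eq (by ring))
  exact (Int.isCoprime_two_left.mpr hodd).isUnit_of_dvd'
    (dvd_two_of_dvd_add_sub hab hmn hpm hpn hsm hsn) hd

theorem Int.coprime_gcd_add_gcd_sub {a b m n : ℤ}
    (hab : IsCoprime a b) (hmn : IsCoprime m n) (hodd_ab : Odd (a - b)) (hodd_mn : Odd (m - n)) :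
    Nat.Coprime (Int.gcd (a * m + b * n) (a * n + b * m))
      (Int.gcd (a * m - b * n) (a * n - b * m)) := by
  refine Nat.coprime_of_dvd' fun k _ hplus hminus => ?_
  obtain ⟨hpm, hpn⟩ := Int.dvd_gcd_iff.mp hplus
  obtain ⟨hsm, hsn⟩ := Int.dvd_gcd_iff.mp hminus
  exact Int.natCast_dvd_natCast.mp <| isUnit_iff_dvd_one.mp <|
    Int.isUnit_of_dvd_add_sub hab hmn hodd_ab hodd_mn hpm hpn hsm hsn

/-- `Int.gcd` ignores signs, so the absolute values of the informal statement are built in. -/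
theorem stmt_4_general (a b m n : ℤ)
    (hcop_ab : Int.gcd a b = 1) (hcop_mn : Int.gcd m n = 1)
    (hodd_ab : Odd (a - b)) (hodd_mn : Odd (m - n)) :
    Nat.Coprime (Int.gcd (a * m + b * n) (a * n + b * m))
      (Int.gcd (a * m - b * n) (a * n - b * m)) ∧
    ∀ p : ℕ, p.Prime →
      ¬ (p ∣ Int.gcd (a * m + b * n) (a * n + b * m) ∧
         p ∣ Int.gcd (a * m - b * n) (a * n - b * m)) := by
  have hcop := Int.coprime_gcd_add_gcd_sub (Int.isCoprime_iff_gcd_eq_one.mpr hcop_ab)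
    (Int.isCoprime_iff_gcd_eq_one.mpr hcop_mn) hodd_ab hodd_mn
  exact ⟨hcop, fun p hp ⟨hplus, hminus⟩ =>
    hp.one_lt.ne' (Nat.eq_one_of_dvd_coprimes hcop hplus hminus)⟩

/-- Disjointness of the two Gaussian gcds: `gcd(am+bn, an+bm)` and
`gcd(|am−bn|, |an−bm|)` are coprime; in particular no prime divides both.
(`Int.gcd` returns a natural number and is insensitive to sign, so the
absolute values are built in.) -/
theorem stmt_4 (a b m n : ℤ)
    (ha : 0 < a) (hb : 0 < b) (hm : 0 < m) (hn : 0 < n)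
    (hcop_ab : Int.gcd a b = 1) (hcop_mn : Int.gcd m n = 1)
    (hodd_ab : Odd (a - b)) (hodd_mn : Odd (m - n)) :
    Nat.Coprime (Int.gcd (a * m + b * n) (a * n + b * m))
      (Int.gcd (a * m - b * n) (a * n - b * m)) ∧
    ∀ p : ℕ, p.Prime →
      ¬ (p ∣ Int.gcd (a * m + b * n) (a * n + b * m) ∧
         p ∣ Int.gcd (a * m - b * n) (a * n - b * m)) :=
  stmt_4_general a b m n hcop_ab hcop_mn hodd_ab hodd_mn
end

section
/- Let a > b > 0 and m > n > 0 be integers with gcd(a,b) = 1, gcd(m,n) = 1, a − b odd, and m − n odd. Set g₊ = gcd(am + bn, an + bm) and g₋ = gcd(|am − bn|, |an − bm|). Then g₊ · g₋ = gcd(a² − b², m² − n²). -/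
/-!
Write `X = am + bn`, `Y = an + bm`, `X' = am − bn`, `Y' = an − bm`, `A = a² − b²` and
`M = m² − n²`. The product of the ideals `(X, Y)` and `(X', Y')` is generated by `XX'`, `XY'`,
`YX'`, `YY'`, which are `m²A + b²M`, `mnA − abM`, `mnA + abM`, `n²A − b²M`; so `gcd(A, M)`
divides `g₊ g₋`. Conversely `XX' + YY' = (m² + n²)A` and `XY' + YX' = 2mnA`, where `m² + n²`
and `2mn` are coprime because `m, n` are coprime of opposite parity; hence `g₊ g₋ ∣ A`, and
symmetrically `g₊ g₋ ∣ M`.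
-/

section CommRing

variable {R : Type*} [CommRing R]

lemma IsCoprime.sq_add_sq_two_mul {m n : R} (h : IsCoprime m n) (hodd : Odd (m - n)) :
    IsCoprime (m ^ 2 + n ^ 2) (2 * m * n) := by
  have h2 : IsCoprime (m ^ 2 + n ^ 2) 2 := by
    obtain ⟨k, hk⟩ := hodd
    -- `m² + n² = (m - n)² + 2mn = 2 (2k² + 2k + mn) + 1`
    exact ⟨1, -(2 * k ^ 2 + 2 * k + m * n), by linear_combination (m - n + 2 * k + 1) * hk⟩
  have hm : IsCoprime (m ^ 2 + n ^ 2) m := by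
    simpa [sq, add_comm] using h.symm.pow_left (m := 2) |>.add_mul_left_left m
  have hn : IsCoprime (m ^ 2 + n ^ 2) n := by
    simpa [sq] using h.pow_left (m := 2) |>.add_mul_left_left n
  simpa [mul_assoc] using h2.mul_right (hm.mul_right hn)

lemma IsCoprime.dvd_of_dvd_mul_of_dvd_mul {c e d x : R} (h : IsCoprime c e)
    (hc : d ∣ c * x) (he : d ∣ e * x) : d ∣ x := by
  obtain ⟨u, v, huv⟩ := h
  have hx : x = u * (c * x) + v * (e * x) := by linear_combination -x * huv
  rw [hx]
  exact dvd_add (hc.mul_left u) (he.mul_left v)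

end CommRing

lemma Int.dvd_gcd_mul_gcd {d x y x' y' : ℤ} (h₁ : d ∣ x * x') (h₂ : d ∣ x * y')
    (h₃ : d ∣ y * x') (h₄ : d ∣ y * y') : d ∣ ((x.gcd y * x'.gcd y' : ℕ) : ℤ) := by
  rw [Nat.cast_mul, Int.gcd_eq_gcd_ab x y, Int.gcd_eq_gcd_ab x' y']
  have hexpand : (x * x.gcdA y + y * x.gcdB y) * (x' * x'.gcdA y' + y' * x'.gcdB y') =
      x.gcdA y * x'.gcdA y' * (x * x') + x.gcdA y * x'.gcdB y' * (x * y') +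
        x.gcdB y * x'.gcdA y' * (y * x') + x.gcdB y * x'.gcdB y' * (y * y') := by ring
  rw [hexpand]
  exact dvd_add (dvd_add (dvd_add (h₁.mul_left _) (h₂.mul_left _)) (h₃.mul_left _))
    (h₄.mul_left _)

section Products

variable {a b m n d : ℤ}

lemma dvd_sq_sub_sq_of_dvd_products (hab : IsCoprime a b) (hmn : IsCoprime m n)
    (hodd_ab : Odd (a - b)) (hodd_mn : Odd (m - n))
    (h₁ : d ∣ (a * m + b * n) * (a * m - b * n))
    (h₂ : d ∣ (a * m + b * n) * (a * n - b * m))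
    (h₃ : d ∣ (a * n + b * m) * (a * m - b * n))
    (h₄ : d ∣ (a * n + b * m) * (a * n - b * m)) :
    d ∣ a ^ 2 - b ^ 2 ∧ d ∣ m ^ 2 - n ^ 2 := by
  have hA₁ : d ∣ (m ^ 2 + n ^ 2) * (a ^ 2 - b ^ 2) :=
    (dvd_add h₁ h₄).trans (dvd_of_eq (by ring))
  have hA₂ : d ∣ (2 * m * n) * (a ^ 2 - b ^ 2) :=
    (dvd_add h₂ h₃).trans (dvd_of_eq (by ring))
  have hM₁ : d ∣ (a ^ 2 + b ^ 2) * (m ^ 2 - n ^ 2) :=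
    (dvd_sub h₁ h₄).trans (dvd_of_eq (by ring))
  have hM₂ : d ∣ (2 * a * b) * (m ^ 2 - n ^ 2) :=
    (dvd_sub h₃ h₂).trans (dvd_of_eq (by ring))
  exact ⟨(hmn.sq_add_sq_two_mul hodd_mn).dvd_of_dvd_mul_of_dvd_mul hA₁ hA₂,
    (hab.sq_add_sq_two_mul hodd_ab).dvd_of_dvd_mul_of_dvd_mul hM₁ hM₂⟩

lemma dvd_products_of_dvd_sq_sub_sq (hA : d ∣ a ^ 2 - b ^ 2) (hM : d ∣ m ^ 2 - n ^ 2) :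
    d ∣ (a * m + b * n) * (a * m - b * n) ∧ d ∣ (a * m + b * n) * (a * n - b * m) ∧
      d ∣ (a * n + b * m) * (a * m - b * n) ∧ d ∣ (a * n + b * m) * (a * n - b * m) := by
  refine ⟨?_, ?_, ?_, ?_⟩
  · exact (dvd_add (hA.mul_left (m ^ 2)) (hM.mul_left (b ^ 2))).trans (dvd_of_eq (by ring))
  · exact (dvd_sub (hA.mul_left (m * n)) (hM.mul_left (a * b))).trans (dvd_of_eq (by ring))
  · exact (dvd_add (hA.mul_left (m * n)) (hM.mul_left (a * b))).trans (dvd_of_eq (by ring))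
  · exact (dvd_sub (hA.mul_left (n ^ 2)) (hM.mul_left (b ^ 2))).trans (dvd_of_eq (by ring))

end Products

/-- `Int.gcd` returns a natural number and is insensitive to sign, so the absolute values in
`g₋` are built in. -/
theorem stmt_6_general (a b m n : ℤ)
    (hcop_ab : Int.gcd a b = 1) (hcop_mn : Int.gcd m n = 1)
    (hodd_ab : Odd (a - b)) (hodd_mn : Odd (m - n)) :
    Int.gcd (a * m + b * n) (a * n + b * m) *
      Int.gcd (a * m - b * n) (a * n - b * m) =
    Int.gcd (a ^ 2 - b ^ 2) (m ^ 2 - n ^ 2) := by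
  apply Nat.dvd_antisymm
  · obtain ⟨hA, hM⟩ := dvd_sq_sub_sq_of_dvd_products (Int.isCoprime_iff_gcd_eq_one.mpr hcop_ab)
      (Int.isCoprime_iff_gcd_eq_one.mpr hcop_mn) hodd_ab hodd_mn
      (mul_dvd_mul (Int.gcd_dvd_left _ _) (Int.gcd_dvd_left _ _))
      (mul_dvd_mul (Int.gcd_dvd_left _ _) (Int.gcd_dvd_right _ _))
      (mul_dvd_mul (Int.gcd_dvd_right _ _) (Int.gcd_dvd_left _ _))
      (mul_dvd_mul (Int.gcd_dvd_right _ _) (Int.gcd_dvd_right _ _))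
    exact Int.natCast_dvd_natCast.mp (by exact_mod_cast Int.dvd_gcd hA hM)
  · obtain ⟨h₁, h₂, h₃, h₄⟩ :=
      dvd_products_of_dvd_sq_sub_sq (Int.gcd_dvd_left (a ^ 2 - b ^ 2) (m ^ 2 - n ^ 2))
        (Int.gcd_dvd_right _ _)
    exact Int.natCast_dvd_natCast.mp (Int.dvd_gcd_mul_gcd h₁ h₂ h₃ h₄)

/-- Structural identity for the semi-scaled fibration coordinates:
`g₊ · g₋ = gcd(a² − b², m² − n²)`. (`Int.gcd` returns a natural number
and is insensitive to sign, so the absolute values are built in.) -/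
theorem stmt_6 (a b m n : ℤ)
    (hb : 0 < b) (hab : b < a) (hn : 0 < n) (hmn : n < m)
    (hcop_ab : Int.gcd a b = 1) (hcop_mn : Int.gcd m n = 1)
    (hodd_ab : Odd (a - b)) (hodd_mn : Odd (m - n)) :
    Int.gcd (a * m + b * n) (a * n + b * m) *
      Int.gcd (a * m - b * n) (a * n - b * m) =
    Int.gcd (a ^ 2 - b ^ 2) (m ^ 2 - n ^ 2) :=
  stmt_6_general a b m n hcop_ab hcop_mn hodd_ab hodd_mn
end

section
/- Let a, b, m, n be positive integers with gcd(a,b) = 1 and gcd(m,n) = 1, let p be an odd prime and e ≥ 1 an integer such that p^e divides both a² − b² and m² − n². Then p^e divides gcd(am + bn, an + bm) or p^e divides gcd(|am − bn|, |an − bm|). -/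
/-! Since `p` is odd and `gcd(a, b) = 1`, the prime `p` cannot divide both factors of
`a² − b² = (a − b)(a + b)`, so `a ≡ ±b (mod p^e)`, and likewise `m ≡ ±n (mod p^e)`.
With equal signs `am − bn` and `an − bm` vanish modulo `p^e`; with opposite signs
`am + bn` and `an + bm` do. -/

section Signs

variable {R : Type*} [CommRing R]

theorem Prime.pow_dvd_sub_or_pow_dvd_add_of_pow_dvd_sq_sub_sq [IsDomain R] {p x y : R}
    (hp : Prime p) (hp2 : ¬p ∣ 2) (hxy : IsCoprime x y) (e : ℕ)
    (h : p ^ e ∣ x ^ 2 - y ^ 2) : p ^ e ∣ x - y ∨ p ^ e ∣ x + y := by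
  rw [sq_sub_sq] at h
  by_cases hsub : p ∣ x - y
  · by_cases hadd : p ∣ x + y
    · have hx : p ∣ 2 * x := by convert dvd_add hsub hadd using 1; ring
      have hy : p ∣ 2 * y := by convert dvd_sub hadd hsub using 1; ring
      exact absurd (hxy.isUnit_of_dvd' ((hp.dvd_mul.mp hx).resolve_left hp2)
        ((hp.dvd_mul.mp hy).resolve_left hp2)) hp.not_isUnit
    · exact .inl (hp.pow_dvd_of_dvd_mul_left e hadd h)
  · exact .inr (hp.pow_dvd_of_dvd_mul_right e hsub h)

variable {q a b m n : R}

theorem dvd_mul_sub_mul_of_same_sign (h : q ∣ a - b ∧ q ∣ m - n ∨ q ∣ a + b ∧ q ∣ m + n) :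
    q ∣ a * m - b * n ∧ q ∣ a * n - b * m := by
  rcases h with ⟨hab, hmn⟩ | ⟨hab, hmn⟩
  · exact ⟨by convert hab.linear_comb hmn m b using 1; ring,
      by convert hab.linear_comb hmn n (-b) using 1; ring⟩
  · exact ⟨by convert hab.linear_comb hmn m (-b) using 1; ring,
      by convert hab.linear_comb hmn n (-b) using 1; ring⟩

theorem dvd_mul_add_mul_of_opposite_sign (h : q ∣ a - b ∧ q ∣ m + n ∨ q ∣ a + b ∧ q ∣ m - n) :
    q ∣ a * m + b * n ∧ q ∣ a * n + b * m := by
  rcases h with ⟨hab, hmn⟩ | ⟨hab, hmn⟩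
  · exact ⟨by convert hab.linear_comb hmn m b using 1; ring,
      by convert hab.linear_comb hmn n b using 1; ring⟩
  · exact ⟨by convert hab.linear_comb hmn m (-b) using 1; ring,
      by convert hab.linear_comb hmn n b using 1; ring⟩

end Signs

theorem stmt_9_general (a b m n : ℤ)
    (hcop_ab : Int.gcd a b = 1) (hcop_mn : Int.gcd m n = 1)
    (p : ℕ) (hp : p.Prime) (hp2 : p ≠ 2) (e : ℕ)
    (hdvd1 : (p : ℤ) ^ e ∣ a ^ 2 - b ^ 2)
    (hdvd2 : (p : ℤ) ^ e ∣ m ^ 2 - n ^ 2) :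
    (p : ℤ) ^ e ∣ (Int.gcd (a * m + b * n) (a * n + b * m) : ℤ) ∨
    (p : ℤ) ^ e ∣ (Int.gcd (a * m - b * n) (a * n - b * m) : ℤ) := by
  have hp' : Prime (p : ℤ) := Nat.prime_iff_prime_int.mp hp
  have hp2' : ¬(p : ℤ) ∣ 2 := fun h ↦
    hp2 ((Nat.prime_dvd_prime_iff_eq hp Nat.prime_two).mp (by exact_mod_cast h))
  rcases hp'.pow_dvd_sub_or_pow_dvd_add_of_pow_dvd_sq_sub_sq hp2'
      (Int.isCoprime_iff_gcd_eq_one.mpr hcop_ab) e hdvd1 with hab | hab <;>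
    rcases hp'.pow_dvd_sub_or_pow_dvd_add_of_pow_dvd_sq_sub_sq hp2'
      (Int.isCoprime_iff_gcd_eq_one.mpr hcop_mn) e hdvd2 with hmn | hmn
  · exact .inr <| (dvd_mul_sub_mul_of_same_sign (.inl ⟨hab, hmn⟩)).elim Int.dvd_coe_gcd
  · exact .inl <| (dvd_mul_add_mul_of_opposite_sign (.inl ⟨hab, hmn⟩)).elim Int.dvd_coe_gcd
  · exact .inl <| (dvd_mul_add_mul_of_opposite_sign (.inr ⟨hab, hmn⟩)).elim Int.dvd_coe_gcd
  · exact .inr <| (dvd_mul_sub_mul_of_same_sign (.inr ⟨hab, hmn⟩)).elim Int.dvd_coe_gcd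

/-- If an odd prime power `p^e` (with `e ≥ 1`) divides both `a² − b²` and
`m² − n²`, then it divides `g₊ = gcd(am+bn, an+bm)` or
`g₋ = gcd(|am−bn|, |an−bm|)`. -/
theorem stmt_9 (a b m n : ℤ)
    (ha : 0 < a) (hb : 0 < b) (hm : 0 < m) (hn : 0 < n)
    (hcop_ab : Int.gcd a b = 1) (hcop_mn : Int.gcd m n = 1)
    (p : ℕ) (hp : p.Prime) (hp2 : p ≠ 2) (e : ℕ) (he : 1 ≤ e)
    (hdvd1 : (p : ℤ) ^ e ∣ a ^ 2 - b ^ 2)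
    (hdvd2 : (p : ℤ) ^ e ∣ m ^ 2 - n ^ 2) :
    (p : ℤ) ^ e ∣ (Int.gcd (a * m + b * n) (a * n + b * m) : ℤ) ∨
    (p : ℤ) ^ e ∣ (Int.gcd (a * m - b * n) (a * n - b * m) : ℤ) :=
  stmt_9_general a b m n hcop_ab hcop_mn p hp hp2 e hdvd1 hdvd2
end
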